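/- arXiv:1601.00458 — 2 statements merged into one kernel-verified Lean document; each statement's English description precedes it below -/
import Mathlib

section
/- Let 𝔤 be a finite-dimensional complex Lie algebra and D a derivation of 𝔤. Then the sum 𝔤⁺ of all generalized eigenspaces of D corresponding to eigenvalues with positive real part is a nilpotent Lie subalgebra of 𝔤. -/
/-!
A derivation `D` maps `⁅𝔤_α, 𝔤_β⁆` into `𝔤_{α+β}` (Leibniz rule for `D - (α + β)`), so the
filtration `F t = ⨁_{Re α ≥ t} 𝔤_α` satisfies `⁅F s, F t⁆ ⊆ F (s + t)`. Only finitely many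
eigenvalues occur, hence `𝔤⁺ ⊆ F δ` for some `δ > 0`, while `F t = 𝔤` for `t ≪ 0` and `F t = 0`
for `t ≫ 0`. So `ad x` raises the filtration degree by `δ` and is nilpotent on all of `𝔤` for
`x ∈ 𝔤⁺`, and Engel's theorem makes `𝔤⁺` nilpotent.
-/

open Module Topology

namespace LieDerivation

section CommRing

variable {R L : Type*} [CommRing R] [LieRing L] [LieAlgebra R L] (D : LieDerivation R L L)

lemma sub_smul_apply_lie (α β : R) (a b : L) :
    (D.toLinearMap - (α + β) • 1) ⁅a, b⁆ =
      ⁅(D.toLinearMap - α • 1) a, b⁆ + ⁅a, (D.toLinearMap - β • 1) b⁆ := by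
  simp only [LinearMap.sub_apply, LinearMap.smul_apply, End.one_apply, coeFn_coe,
    D.apply_lie_eq_add, sub_lie, lie_sub, smul_lie, lie_smul]
  module

lemma pow_sub_smul_apply_lie_eq_zero {α β : R} (k l : ℕ) {a b : L}
    (ha : ((D.toLinearMap - α • 1) ^ k) a = 0) (hb : ((D.toLinearMap - β • 1) ^ l) b = 0) :
    ((D.toLinearMap - (α + β) • 1) ^ (k + l)) ⁅a, b⁆ = 0 := by
  induction k generalizing l a b with
  | zero => rw [pow_zero, End.one_apply] at ha; rw [ha, zero_lie, map_zero]
  | succ k ihk =>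
    induction l generalizing a b with
    | zero => rw [pow_zero, End.one_apply] at hb; rw [hb, lie_zero, map_zero]
    | succ l ihl =>
      rw [pow_succ, End.mul_apply] at ha hb
      rw [show k + 1 + (l + 1) = k + (l + 1) + 1 by omega, pow_succ, End.mul_apply,
        sub_smul_apply_lie, map_add, ihk (l + 1) ha (by rwa [pow_succ, End.mul_apply]),
        show k + (l + 1) = k + 1 + l by omega, ihl (by rwa [pow_succ, End.mul_apply]) hb, add_zero]

lemma lie_mem_maxGenEigenspace {α β : R} {a b : L}
    (ha : a ∈ End.maxGenEigenspace D.toLinearMap α)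
    (hb : b ∈ End.maxGenEigenspace D.toLinearMap β) :
    ⁅a, b⁆ ∈ End.maxGenEigenspace D.toLinearMap (α + β) := by
  rw [End.mem_maxGenEigenspace] at ha hb ⊢
  obtain ⟨k, hk⟩ := ha
  obtain ⟨l, hl⟩ := hb
  exact ⟨k + l, D.pow_sub_smul_apply_lie_eq_zero k l hk hl⟩

end CommRing

section Complex

variable {L : Type*} [LieRing L] [LieAlgebra ℂ L] (D : LieDerivation ℂ L L)

def reFiltration (t : ℝ) : Submodule ℂ L :=
  ⨆ (α : ℂ) (_ : t ≤ α.re), End.maxGenEigenspace D.toLinearMap α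

lemma reFiltration_antitone : Antitone D.reFiltration :=
  fun _ _ hst => iSup₂_mono' fun α h => ⟨α, hst.trans h, le_rfl⟩

lemma maxGenEigenspace_le_reFiltration {α : ℂ} {t : ℝ}
    (h : End.maxGenEigenspace D.toLinearMap α ≠ ⊥ → t ≤ α.re) :
    End.maxGenEigenspace D.toLinearMap α ≤ D.reFiltration t := by
  by_cases h₀ : End.maxGenEigenspace D.toLinearMap α = ⊥
  · exact h₀ ▸ bot_le
  · exact le_iSup₂ (f := fun α (_ : t ≤ α.re) => End.maxGenEigenspace D.toLinearMap α) α (h h₀)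

lemma lie_mem_reFiltration {s t : ℝ} {a b : L} (ha : a ∈ D.reFiltration s)
    (hb : b ∈ D.reFiltration t) : ⁅a, b⁆ ∈ D.reFiltration (s + t) := by
  suffices Submodule.map₂ (LieAlgebra.ad ℂ L : L →ₗ[ℂ] End ℂ L) (D.reFiltration s)
      (D.reFiltration t) ≤ D.reFiltration (s + t) from this (Submodule.apply_mem_map₂ _ ha hb)
  simp only [reFiltration, Submodule.map₂_iSup_left, Submodule.map₂_iSup_right, iSup_le_iff,
    Submodule.map₂_le]
  intro α hα β hβ a ha b hb
  exact D.maxGenEigenspace_le_reFiltration (fun _ => by rw [Complex.add_re]; linarith)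
    (D.lie_mem_maxGenEigenspace ha hb)

lemma pow_ad_apply_mem_reFiltration {s t : ℝ} {x y : L} (hx : x ∈ D.reFiltration s)
    (hy : y ∈ D.reFiltration t) (n : ℕ) :
    (LieAlgebra.ad ℂ L x ^ n) y ∈ D.reFiltration (t + n * s) := by
  induction n with
  | zero => simpa using hy
  | succ n ih =>
    rw [pow_succ', End.mul_apply, LieAlgebra.ad_apply]
    convert D.lie_mem_reFiltration hx ih using 2
    push_cast
    ring

variable [FiniteDimensional ℂ L]

lemma finite_maxGenEigenspace_ne_bot :
    {α : ℂ | End.maxGenEigenspace D.toLinearMap α ≠ ⊥}.Finite :=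
  WellFoundedGT.finite_ne_bot_of_iSupIndep (End.independent_maxGenEigenspace _)

lemma exists_reFiltration_eq_top : ∃ t, D.reFiltration t = ⊤ := by
  obtain ⟨t, ht⟩ := (D.finite_maxGenEigenspace_ne_bot.image Complex.re).bddBelow
  refine ⟨t, top_le_iff.mp ?_⟩
  rw [← End.iSup_maxGenEigenspace_eq_top D.toLinearMap]
  exact iSup_le fun α => D.maxGenEigenspace_le_reFiltration fun h => ht ⟨α, h, rfl⟩

lemma exists_reFiltration_eq_bot : ∃ t, D.reFiltration t = ⊥ := by
  obtain ⟨t, ht⟩ := (D.finite_maxGenEigenspace_ne_bot.image Complex.re).bddAbove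
  refine ⟨t + 1, le_bot_iff.mp (iSup₂_le fun α hα => le_bot_iff.mpr ?_)⟩
  by_contra h
  linarith [ht ⟨α, h, rfl⟩]

lemma exists_pos_iSup_maxGenEigenspace_le_reFiltration :
    ∃ δ > 0, ⨆ (α : ℂ) (_ : 0 < α.re), End.maxGenEigenspace D.toLinearMap α ≤
      D.reFiltration δ := by
  have hS := D.finite_maxGenEigenspace_ne_bot.image Complex.re
  have : ∀ᶠ δ in 𝓝[>] (0 : ℝ), 0 < δ ∧ ∀ r ∈ Complex.re '' _, 0 < r → δ ≤ r :=
    eventually_mem_nhdsWithin.and <| (Filter.eventually_all_finite hS).2 fun r _ =>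
      Filter.eventually_imp_distrib_left.2 fun hr => nhdsWithin_le_nhds (eventually_le_nhds hr)
  obtain ⟨δ, hδ, hδS⟩ := this.exists
  exact ⟨δ, hδ, iSup₂_le fun α hα =>
    D.maxGenEigenspace_le_reFiltration fun h => hδS _ ⟨α, h, rfl⟩ hα⟩

lemma isNilpotent_ad_of_mem_reFiltration {δ : ℝ} (hδ : 0 < δ) {x : L}
    (hx : x ∈ D.reFiltration δ) : IsNilpotent (LieAlgebra.ad ℂ L x) := by
  obtain ⟨t₀, ht₀⟩ := D.exists_reFiltration_eq_top
  obtain ⟨t₁, ht₁⟩ := D.exists_reFiltration_eq_bot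
  obtain ⟨n, hn⟩ := exists_nat_gt ((t₁ - t₀) / δ)
  have hn : t₁ ≤ t₀ + n * δ := by rw [div_lt_iff₀ hδ] at hn; linarith
  refine ⟨n, LinearMap.ext fun y => ?_⟩
  have hy : y ∈ D.reFiltration t₀ := ht₀ ▸ Submodule.mem_top
  simpa [ht₁] using D.reFiltration_antitone hn (D.pow_ad_apply_mem_reFiltration hx hy n)

def posGenEigenSubalgebra : LieSubalgebra ℂ L where
  toSubmodule := ⨆ (α : ℂ) (_ : 0 < α.re), End.maxGenEigenspace D.toLinearMap α
  lie_mem' {x y} hx hy := by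
    obtain ⟨δ, hδ, hle⟩ := D.exists_pos_iSup_maxGenEigenspace_le_reFiltration
    have hδδ : D.reFiltration (δ + δ) ≤ ⨆ (α : ℂ) (_ : 0 < α.re),
        End.maxGenEigenspace D.toLinearMap α :=
      iSup₂_mono' fun α h => ⟨α, (add_pos hδ hδ).trans_le h, le_rfl⟩
    exact hδδ (D.lie_mem_reFiltration (hle hx) (hle hy))

end Complex

end LieDerivation

/-- The sum `𝔤⁺` of the generalized eigenspaces of a derivation `D` for eigenvalues with
positive real part is a nilpotent Lie subalgebra. -/
theorem stmt_1 (L : Type*) [LieRing L] [LieAlgebra ℂ L] [FiniteDimensional ℂ L]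
    (D : LieDerivation ℂ L L) :
    ∃ K : LieSubalgebra ℂ L,
      (K.toSubmodule = ⨆ (α : ℂ) (_ : 0 < α.re),
          Module.End.maxGenEigenspace D.toLinearMap α) ∧
      LieRing.IsNilpotent K := by
  refine ⟨D.posGenEigenSubalgebra, rfl, ?_⟩
  obtain ⟨δ, hδ, hle⟩ := D.exists_pos_iSup_maxGenEigenspace_le_reFiltration
  rw [LieAlgebra.isNilpotent_iff_forall (R := ℂ)]
  exact fun x => LieSubalgebra.isNilpotent_ad_of_isNilpotent_ad _
    (D.isNilpotent_ad_of_mem_reFiltration hδ (hle x.2))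
end

section
/- Let D be a derivation of a finite-dimensional real Lie algebra 𝔤 and for each eigenvalue α of the complexification of D with Re(α) = 0 and α ≠ 0, let 𝔤^α := ⊕_{j ≥ 1} 𝔤_{jα} (sum of generalized eigenspaces of positive integer multiples of α). Then 𝔤^α is a nilpotent Lie subalgebra of 𝔤 (working in the complexification). -/
/-!
Since `D - (μ + ν)` acts on `⁅x, y⁆` as the commuting sum `(D - μ) ⊗ 1 + 1 ⊗ (D - ν)` acts on
`x ⊗ y`, the bracket maps `𝔤_μ × 𝔤_ν` into `𝔤_{μ+ν}`. Hence `S m = ⊕_{j ≥ m} 𝔤_{jα}` satisfies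
`⁅S m, S n⁆ ⊆ S (m + n)`. As `j ↦ jα` is injective and `D` has finitely many eigenvalues,
`S m = 0` for large `m`, so every `ad x` with `x ∈ 𝔤^α = S 1` is nilpotent on `𝔤^α`, and Engel's
theorem applies.
-/

open TensorProduct

namespace Module.End

variable {R M N P : Type*} [CommRing R] [AddCommGroup M] [Module R M] [AddCommGroup N] [Module R N]
  [AddCommGroup P] [Module R P]

lemma map_mem_maxGenEigenspace_of_comp_eq {φ : M →ₗ[R] N} {f : End R M} {g : End R N}
    (h : g ∘ₗ φ = φ ∘ₗ f) {μ : R} {x : M} (hx : x ∈ f.maxGenEigenspace μ) :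
    φ x ∈ g.maxGenEigenspace μ := by
  obtain ⟨k, hk⟩ := (mem_maxGenEigenspace f μ x).mp hx
  have hsub : (g - μ • 1) ∘ₗ φ = φ ∘ₗ (f - μ • 1) := by
    rw [LinearMap.sub_comp, LinearMap.comp_sub, h, LinearMap.smul_comp, LinearMap.comp_smul]
    rfl
  refine (mem_maxGenEigenspace g μ _).mpr ⟨k, ?_⟩
  rw [← LinearMap.comp_apply, commute_pow_left_of_commute hsub k, LinearMap.comp_apply, hk,
    map_zero]

lemma tmul_mem_maxGenEigenspace_rTensor_add_lTensor {f : End R M} {g : End R N} {μ ν : R}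
    {x : M} {y : N} (hx : x ∈ f.maxGenEigenspace μ) (hy : y ∈ g.maxGenEigenspace ν) :
    x ⊗ₜ y ∈ maxGenEigenspace (f.rTensor N + g.lTensor M) (μ + ν) := by
  have hx' : x ⊗ₜ y ∈ maxGenEigenspace (f.rTensor N) μ :=
    map_mem_maxGenEigenspace_of_comp_eq (φ := (TensorProduct.mk R M N).flip y) (by ext; simp) hx
  have hy' : x ⊗ₜ y ∈ maxGenEigenspace (g.lTensor M) ν :=
    map_mem_maxGenEigenspace_of_comp_eq (φ := TensorProduct.mk R M N x) (by ext; simp) hy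
  have hcomm : Commute (f.rTensor N) (g.lTensor M) :=
    (LinearMap.rTensor_comp_lTensor (f := f) (g := g)).trans
      (LinearMap.lTensor_comp_rTensor (f := f) (g := g)).symm
  exact genEigenspace_inf_le_add _ _ μ ν ⊤ ⊤ hcomm ⟨hx', hy'⟩

lemma apply_mem_maxGenEigenspace_of_leibniz (B : M →ₗ[R] N →ₗ[R] P) {f : End R M} {g : End R N}
    {h : End R P} (hB : ∀ x y, h (B x y) = B (f x) y + B x (g y)) {μ ν : R} {x : M} {y : N}
    (hx : x ∈ f.maxGenEigenspace μ) (hy : y ∈ g.maxGenEigenspace ν) :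
    B x y ∈ h.maxGenEigenspace (μ + ν) :=
  map_mem_maxGenEigenspace_of_comp_eq (φ := lift B) (by ext; simp [hB])
    (tmul_mem_maxGenEigenspace_rTensor_add_lTensor hx hy)

end Module.End

namespace LieDerivation

open Module.End

section CommRing

variable {R L : Type*} [CommRing R] [LieRing L] [LieAlgebra R L] (D : LieDerivation R L L)

lemma lie_mem_maxGenEigenspace_s19 {μ ν : R} {x y : L} (hx : x ∈ maxGenEigenspace D.toLinearMap μ)
    (hy : y ∈ maxGenEigenspace D.toLinearMap ν) :
    ⁅x, y⁆ ∈ maxGenEigenspace D.toLinearMap (μ + ν) :=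
  apply_mem_maxGenEigenspace_of_leibniz (LinearMap.mk₂ R (⁅·, ·⁆) add_lie smul_lie lie_add lie_smul)
    (fun a b => (D.apply_lie_eq_add a b).trans (add_comm _ _)) hx hy

def multiplesGenEigenspace (α : R) (m : ℕ) : Submodule R L :=
  ⨆ (j : ℕ) (_ : m ≤ j), maxGenEigenspace D.toLinearMap ((j : R) * α)

variable {D} {α : R}

lemma maxGenEigenspace_le_multiplesGenEigenspace {j m : ℕ} (h : m ≤ j) :
    maxGenEigenspace D.toLinearMap ((j : R) * α) ≤ D.multiplesGenEigenspace α m :=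
  le_iSup₂_of_le j h le_rfl

lemma multiplesGenEigenspace_antitone : Antitone (D.multiplesGenEigenspace α) :=
  fun _ _ hmn => iSup₂_le fun _ hj => maxGenEigenspace_le_multiplesGenEigenspace (hmn.trans hj)

lemma lie_mem_multiplesGenEigenspace {m n : ℕ} {x y : L} (hx : x ∈ D.multiplesGenEigenspace α m)
    (hy : y ∈ D.multiplesGenEigenspace α n) : ⁅x, y⁆ ∈ D.multiplesGenEigenspace α (m + n) := by
  let B : L →ₗ[R] L →ₗ[R] L := LinearMap.mk₂ R (⁅·, ·⁆) add_lie smul_lie lie_add lie_smul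
  suffices h : Submodule.map₂ B (D.multiplesGenEigenspace α m) (D.multiplesGenEigenspace α n) ≤
      D.multiplesGenEigenspace α (m + n) from h (Submodule.apply_mem_map₂ B hx hy)
  simp only [multiplesGenEigenspace, Submodule.map₂_iSup_left, Submodule.map₂_iSup_right,
    iSup_le_iff, Submodule.map₂_le]
  intro j hj i hi x hx y hy
  have hxy := D.lie_mem_maxGenEigenspace_s19 hx hy
  rw [← add_mul, ← Nat.cast_add] at hxy
  exact maxGenEigenspace_le_multiplesGenEigenspace (add_le_add hi hj) hxy

variable (D α) in
def multiplesGenEigenSubalgebra : LieSubalgebra R L :=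
  { D.multiplesGenEigenspace α 1 with
    lie_mem' := fun hx hy =>
      multiplesGenEigenspace_antitone (Nat.le_add_left 1 1) (lie_mem_multiplesGenEigenspace hx hy) }

lemma mem_multiplesGenEigenSubalgebra {x : L} :
    x ∈ D.multiplesGenEigenSubalgebra α ↔ x ∈ D.multiplesGenEigenspace α 1 :=
  Iff.rfl

lemma ad_pow_apply_mem_multiplesGenEigenspace (x y : D.multiplesGenEigenSubalgebra α) (n : ℕ) :
    ((LieAlgebra.ad R _ x ^ n) y : L) ∈ D.multiplesGenEigenspace α (n + 1) := by
  induction n with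
  | zero => exact mem_multiplesGenEigenSubalgebra.mp y.2
  | succ n ih =>
    rw [pow_succ', mul_apply, LieAlgebra.ad_apply, LieSubalgebra.coe_bracket,
      add_comm (n + 1) 1]
    exact lie_mem_multiplesGenEigenspace (mem_multiplesGenEigenSubalgebra.mp x.2) ih

end CommRing

section Field

variable {K L : Type*} [Field K] [CharZero K] [LieRing L] [LieAlgebra K L] [FiniteDimensional K L]
  {D : LieDerivation K L L} {α : K}

lemma exists_multiplesGenEigenspace_eq_bot (hα : α ≠ 0) :
    ∃ m, D.multiplesGenEigenspace α m = ⊥ := by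
  have hfin : {j : ℕ | maxGenEigenspace D.toLinearMap (j * α) ≠ ⊥}.Finite :=
    (Submodule.finite_ne_bot_of_iSupIndep (independent_maxGenEigenspace D.toLinearMap)).preimage
      ((mul_left_injective₀ hα).comp Nat.cast_injective).injOn
  obtain ⟨m, hm⟩ := hfin.bddAbove
  refine ⟨m + 1, iSup₂_eq_bot.mpr fun j hj => ?_⟩
  by_contra hne
  exact absurd (hm hne) (by omega)

theorem isNilpotent_multiplesGenEigenSubalgebra (hα : α ≠ 0) :
    LieRing.IsNilpotent (D.multiplesGenEigenSubalgebra α) := by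
  obtain ⟨m, hm⟩ := exists_multiplesGenEigenspace_eq_bot (D := D) hα
  rw [LieAlgebra.isNilpotent_iff_forall (R := K)]
  refine fun x => ⟨m, LinearMap.ext fun y => Subtype.ext ?_⟩
  have hy :=
    multiplesGenEigenspace_antitone m.le_succ (ad_pow_apply_mem_multiplesGenEigenspace x y m)
  rwa [hm, Submodule.mem_bot] at hy

end Field

end LieDerivation

theorem stmt_19_general (L : Type*) [LieRing L] [LieAlgebra ℂ L] [FiniteDimensional ℂ L]
    (D : LieDerivation ℂ L L) (α : ℂ) (hα : α ≠ 0) :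
    ∃ K : LieSubalgebra ℂ L,
      (K.toSubmodule = ⨆ (j : ℕ) (_ : 1 ≤ j),
          Module.End.maxGenEigenspace D.toLinearMap ((j : ℂ) * α)) ∧
      LieRing.IsNilpotent K :=
  ⟨D.multiplesGenEigenSubalgebra α, rfl, LieDerivation.isNilpotent_multiplesGenEigenSubalgebra hα⟩

/-- For a derivation `D` (on the complexification) and a nonzero eigenvalue `α` with zero real
part, the sum `𝔤^α = ⊕_{j ≥ 1} 𝔤_{jα}` of the generalized eigenspaces of the positive integer
multiples of `α` is a nilpotent Lie subalgebra. -/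
theorem stmt_19 (L : Type*) [LieRing L] [LieAlgebra ℂ L] [FiniteDimensional ℂ L]
    (D : LieDerivation ℂ L L) (α : ℂ) (hα : α ≠ 0) (hre : α.re = 0)
    (heig : Module.End.HasEigenvalue D.toLinearMap α) :
    ∃ K : LieSubalgebra ℂ L,
      (K.toSubmodule = ⨆ (j : ℕ) (_ : 1 ≤ j),
          Module.End.maxGenEigenspace D.toLinearMap ((j : ℂ) * α)) ∧
      LieRing.IsNilpotent K :=
  stmt_19_general L D α hα
end
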